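/- arXiv:2007.04858 — 3 statements merged into one kernel-verified Lean document; each statement's English description precedes it below -/
import Mathlib

section
/- Let A ∈ ℝ^{n×n} be symmetric positive semidefinite, r < n, and let J ⊆ {1,…,n} with |J| = r and A(J,J) invertible. Suppose J is locally optimal for the volume, i.e. |det(A(Ĵ,Ĵ))| ≤ |det(A(J,J))| for every index set Ĵ ⊆ {1,…,n} with |Ĵ| = r and |J ∩ Ĵ| = r−1. Then the cross approximation A_J satisfies ‖A − A_J‖_max ≤ (r+1)·σ_{r+1}(A). -/
open Matrix Finset

/-- Cross approximation `A_J = A(:,J) A(J,J)⁻¹ A(J,:)` built on the principal submatrix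
indexed by the finite index set `J`. -/
noncomputable def crossApprox {n : ℕ} (A : Matrix (Fin n) (Fin n) ℝ) (J : Finset (Fin n)) :
    Matrix (Fin n) (Fin n) ℝ :=
  A.submatrix id (Subtype.val : J → Fin n) *
    (A.submatrix (Subtype.val : J → Fin n) (Subtype.val : J → Fin n))⁻¹ *
    A.submatrix (Subtype.val : J → Fin n) id

/-- Determinant of the principal submatrix `A(J,J)`. -/
noncomputable def pminor {n : ℕ} (A : Matrix (Fin n) (Fin n) ℝ) (J : Finset (Fin n)) : ℝ :=
  (A.submatrix (Subtype.val : J → Fin n) (Subtype.val : J → Fin n)).det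

/-- Nuclear norm: sum of the singular values of `M`, i.e. of the square roots of the
eigenvalues of `Mᴴ M`. -/
noncomputable def nuclearNorm {n : ℕ} (M : Matrix (Fin n) (Fin n) ℝ) : ℝ :=
  ∑ i, Real.sqrt ((Matrix.isHermitian_conjTranspose_mul_self M).eigenvalues i)

/-- Frobenius norm. -/
noncomputable def frobNorm {n : ℕ} (M : Matrix (Fin n) (Fin n) ℝ) : ℝ :=
  Real.sqrt (∑ i, ∑ j, (M i j) ^ 2)

/-- Spectral norm: the largest singular value. -/
noncomputable def specNorm {n : ℕ} (M : Matrix (Fin n) (Fin n) ℝ) : ℝ :=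
  ⨆ i, Real.sqrt ((Matrix.isHermitian_conjTranspose_mul_self M).eigenvalues i)

/-- Max norm: largest magnitude of an entry. -/
noncomputable def maxNorm {n : ℕ} (M : Matrix (Fin n) (Fin n) ℝ) : ℝ :=
  ⨆ i, ⨆ j, |M i j|

/-- The tuple `f` sorted in nonincreasing order. -/
noncomputable def sortedDesc {m : ℕ} (f : Fin m → ℝ) : Fin m → ℝ :=
  fun i => -(((fun j => -f j) ∘ Tuple.sort fun j => -f j) i)

/-- `Esum M k` is the sum of all `k × k` principal minors of `M`. -/
noncomputable def Esum {n : ℕ} (M : Matrix (Fin n) (Fin n) ℝ) (k : ℕ) : ℝ :=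
  ∑ K ∈ Finset.powersetCard k (Finset.univ : Finset (Fin n)), pminor M K

/-!
`E = A - A_J` is, up to zero rows and columns on `J`, the Schur complement of `A(J,J)` in `A`;
hence it is positive semidefinite, `|E i j| ≤ (E i i + E j j) / 2`, and only the diagonal has to be
bounded. For `i ∉ J` and `K = J ∪ {i}` we have `det A(K,K) = det A(J,J) · E i i`. In an eigenbasis,
`det A(K,K) ≤ λ · tr (adj A(K,K)) = λ · ∑_{k ∈ K} det A(K∖k,K∖k)` for every eigenvalue `λ` of
`A(K,K)`. Local optimality bounds each of these `r + 1` minors by `det A(J,J)`, and some eigenvalue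
of `A(K,K)` is at most `σ_{r+1}(A)`, because a nonzero vector supported on the `r + 1` indices of
`K` can be chosen orthogonal to the eigenvectors of the `r` largest eigenvalues of `A`.
-/

namespace Matrix

section Submatrix

variable {l m k R : Type*} [Fintype m] [DecidableEq m] [CommRing R]

lemma mul_one_submatrix_id (B : Matrix l m R) (f : k → m) :
    B * (1 : Matrix m m R).submatrix id f = B.submatrix id f := by
  simpa using mul_submatrix_one (Equiv.refl m) f B

lemma transpose_one_submatrix_id_mul (B : Matrix m l R) (f : k → m) :
    ((1 : Matrix m m R).submatrix id f)ᵀ * B = B.submatrix f id := by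
  simpa using one_submatrix_mul f (Equiv.refl m) B

lemma transpose_mul_mul_one_submatrix_id (B : Matrix m m R) (f : k → m) :
    ((1 : Matrix m m R).submatrix id f)ᵀ * B * (1 : Matrix m m R).submatrix id f =
      B.submatrix f f := by
  rw [Matrix.mul_assoc, mul_one_submatrix_id, transpose_one_submatrix_id_mul, submatrix_submatrix]
  rfl

lemma adjugate_apply_self (B : Matrix m m R) (j : m) :
    B.adjugate j j = (B.submatrix (Subtype.val : {k // k ≠ j} → m) Subtype.val).det := by
  rw [adjugate_apply, twoBlockTriangular_det' _ (· = j) fun i hi k hk => by simp [hi, Ne.symm hk]]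
  simp only [toSquareBlockProp_def, det_unique, of_apply]
  rw [show ((default : {k // k = j}) : m) = j from rfl, updateRow_self, Pi.single_eq_same, one_mul]
  congr 1
  ext a b
  simp [updateRow_ne a.2]

end Submatrix

lemma PosSemidef.abs_apply_le {ι : Type*} [Fintype ι] [DecidableEq ι] {M : Matrix ι ι ℝ}
    (hM : M.PosSemidef) (i j : ι) : |M i j| ≤ (M i i + M j j) / 2 := by
  have hsymm : M j i = M i j := by simpa using congrFun (congrFun hM.1 i) j
  have hq (x : ι → ℝ) : 0 ≤ x ⬝ᵥ (M *ᵥ x) := by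
    simpa using hM.dotProduct_mulVec_nonneg x
  have hadd := hq (Pi.single i 1 + Pi.single j 1)
  have hsub := hq (Pi.single i 1 - Pi.single j 1)
  simp only [mulVec_add, mulVec_sub, mulVec_single_one, add_dotProduct, sub_dotProduct,
    single_dotProduct, col_apply, one_mul, Pi.add_apply, Pi.sub_apply] at hadd hsub
  rw [abs_le]
  constructor <;> linarith

open scoped ComplexOrder in
lemma PosSemidef.sub_mul_inv_mul {m k 𝕜 : Type*} [Fintype m] [DecidableEq m] [Fintype k]
    [DecidableEq k] [RCLike 𝕜] {A : Matrix m m 𝕜} (hA : A.PosSemidef) (S : Matrix m k 𝕜)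
    (hG : IsUnit (Sᴴ * A * S).det) :
    (A - A * S * (Sᴴ * A * S)⁻¹ * (Sᴴ * A)).PosSemidef := by
  set G := Sᴴ * A * S
  have hGh : G⁻¹ᴴ = G⁻¹ := by
    rw [conjTranspose_nonsing_inv, conjTranspose_mul, conjTranspose_mul, hA.1.eq,
      conjTranspose_conjTranspose, ← Matrix.mul_assoc]
  have hGG : G * G⁻¹ = 1 := mul_nonsing_inv G hG
  have hcancel (X : Matrix k m 𝕜) : Sᴴ * (A * (S * (G⁻¹ * X))) = X := by
    simp only [← Matrix.mul_assoc]
    rw [hGG, Matrix.one_mul]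
  have hconj : (1 - S * G⁻¹ * (Sᴴ * A))ᴴ * A * (1 - S * G⁻¹ * (Sᴴ * A)) =
      A - A * S * G⁻¹ * (Sᴴ * A) := by
    simp only [conjTranspose_sub, conjTranspose_one, conjTranspose_mul, conjTranspose_conjTranspose,
      hA.1.eq, hGh]
    simp only [sub_mul, mul_sub, one_mul, mul_one, Matrix.mul_assoc]
    rw [hcancel]
    abel
  rw [← hconj]
  exact hA.conjTranspose_mul_mul_same _

section Spectral

variable {ι : Type*} [Fintype ι] [DecidableEq ι] {B : Matrix ι ι ℝ}

lemma IsHermitian.vecMul_eigenvectorUnitary (hB : B.IsHermitian) (x : ι → ℝ) :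
    x ᵥ* (hB.eigenvectorUnitary : Matrix ι ι ℝ) =
      fun j => hB.eigenvectorBasis j ⬝ᵥ x := by
  ext j; simp [vecMul, dotProduct, mul_comm]

lemma IsHermitian.star_eigenvectorUnitary_mulVec_eq_dotProduct (hB : B.IsHermitian)
    (x : ι → ℝ) : star (hB.eigenvectorUnitary : Matrix ι ι ℝ) *ᵥ x =
      fun j => hB.eigenvectorBasis j ⬝ᵥ x := by
  rw [star_eq_conjTranspose, conjTranspose_eq_transpose_of_trivial, mulVec_transpose,
    hB.vecMul_eigenvectorUnitary]

lemma IsHermitian.dotProduct_mulVec_eq_sum (hB : B.IsHermitian) (x : ι → ℝ) :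
    x ⬝ᵥ (B *ᵥ x) = ∑ j, hB.eigenvalues j * (hB.eigenvectorBasis j ⬝ᵥ x) ^ 2 := by
  conv_lhs => rw [hB.spectral_theorem, Unitary.conjStarAlgAut_apply]
  rw [← mulVec_mulVec, ← mulVec_mulVec, dotProduct_mulVec, hB.vecMul_eigenvectorUnitary,
    hB.star_eigenvectorUnitary_mulVec_eq_dotProduct]
  simp [dotProduct, mulVec_diagonal, sq, mul_left_comm]

lemma IsHermitian.dotProduct_self_eq_sum (hB : B.IsHermitian) (x : ι → ℝ) :
    x ⬝ᵥ x = ∑ j, (hB.eigenvectorBasis j ⬝ᵥ x) ^ 2 := by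
  set U : Matrix ι ι ℝ := (hB.eigenvectorUnitary : Matrix ι ι ℝ)
  have hU : U * star U = 1 := Unitary.coe_mul_star_self hB.eigenvectorUnitary
  calc x ⬝ᵥ x = x ⬝ᵥ ((U * star U) *ᵥ x) := by rw [hU, one_mulVec]
    _ = _ := by
      rw [← mulVec_mulVec, dotProduct_mulVec, hB.vecMul_eigenvectorUnitary,
        hB.star_eigenvectorUnitary_mulVec_eq_dotProduct]
      simp [dotProduct, sq]

lemma IsHermitian.dotProduct_mulVec_le (hB : B.IsHermitian) {c : ℝ} {x : ι → ℝ}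
    (hx : ∀ j, c < hB.eigenvalues j → hB.eigenvectorBasis j ⬝ᵥ x = 0) :
    x ⬝ᵥ (B *ᵥ x) ≤ c * (x ⬝ᵥ x) := by
  rw [hB.dotProduct_mulVec_eq_sum, hB.dotProduct_self_eq_sum, Finset.mul_sum]
  refine Finset.sum_le_sum fun j _ => ?_
  by_cases hj : c < hB.eigenvalues j
  · simp [hx j hj]
  · exact mul_le_mul_of_nonneg_right (not_lt.mp hj) (sq_nonneg _)

lemma IsHermitian.exists_eigenvalue_le (hB : B.IsHermitian) {c : ℝ} {x : ι → ℝ}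
    (hx : x ≠ 0) (hxc : x ⬝ᵥ (B *ᵥ x) ≤ c * (x ⬝ᵥ x)) : ∃ j, hB.eigenvalues j ≤ c := by
  by_contra! h
  have hpos : 0 < ∑ j, (hB.eigenvectorBasis j ⬝ᵥ x) ^ 2 := by
    rw [← hB.dotProduct_self_eq_sum]
    exact dotProduct_self_star_pos_iff.mpr hx
  obtain ⟨j, -, hj⟩ := Finset.exists_ne_zero_of_sum_ne_zero hpos.ne'
  rw [hB.dotProduct_mulVec_eq_sum, hB.dotProduct_self_eq_sum, Finset.mul_sum] at hxc
  refine not_lt_of_ge hxc (Finset.sum_lt_sum (fun i _ => ?_) ⟨j, Finset.mem_univ _, ?_⟩)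
  · exact mul_le_mul_of_nonneg_right (h i).le (sq_nonneg _)
  · exact mul_lt_mul_of_pos_right (h j) (lt_of_le_of_ne (sq_nonneg _) (Ne.symm hj))

lemma IsHermitian.trace_adjugate (hB : B.IsHermitian) :
    B.adjugate.trace = ∑ i, ∏ k ∈ Finset.univ.erase i, hB.eigenvalues k := by
  set U : Matrix ι ι ℝ := (hB.eigenvectorUnitary : Matrix ι ι ℝ)
  have hU : star U * U = 1 := Unitary.coe_star_mul_self hB.eigenvectorUnitary
  conv_lhs => rw [hB.spectral_theorem, Unitary.conjStarAlgAut_apply]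
  rw [adjugate_mul_distrib, adjugate_mul_distrib, trace_mul_comm, Matrix.mul_assoc,
    ← adjugate_mul_distrib, hU, adjugate_one, mul_one]
  simp [adjugate_diagonal, trace_diagonal]

lemma PosSemidef.det_le_eigenvalue_mul_trace_adjugate (hB : B.PosSemidef) (i : ι) :
    B.det ≤ hB.1.eigenvalues i * B.adjugate.trace := by
  rw [hB.1.det_eq_prod_eigenvalues, hB.1.trace_adjugate,
    ← Finset.mul_prod_erase _ _ (Finset.mem_univ i)]
  refine mul_le_mul_of_nonneg_left ?_ (hB.eigenvalues_nonneg i)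
  exact Finset.single_le_sum (f := fun j => ∏ k ∈ Finset.univ.erase j, hB.1.eigenvalues k)
    (fun j _ => Finset.prod_nonneg fun k _ => hB.eigenvalues_nonneg k) (Finset.mem_univ i)

end Spectral

end Matrix

lemma maxNorm_le_of_posSemidef {n : ℕ} {M : Matrix (Fin n) (Fin n) ℝ} (hM : M.PosSemidef)
    {c : ℝ} (hc : 0 ≤ c) (hdiag : ∀ i, M i i ≤ c) : maxNorm M ≤ c :=
  Real.iSup_le (fun i => Real.iSup_le (fun j => (hM.abs_apply_le i j).trans
    (by linarith [hdiag i, hdiag j])) hc) hc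

lemma sortedDesc_apply {m : ℕ} (f : Fin m → ℝ) (i : Fin m) :
    sortedDesc f i = f (Tuple.sort (fun j => -f j) i) :=
  neg_neg _

lemma sort_symm_lt_of_sortedDesc_lt {m : ℕ} {f : Fin m → ℝ} {i j : Fin m}
    (h : sortedDesc f i < f j) : (Tuple.sort fun j => -f j).symm j < i := by
  by_contra! hle
  have := Tuple.monotone_sort (fun j => -f j) hle
  simp only [Function.comp_apply, Equiv.apply_symm_apply, neg_le_neg_iff] at this
  exact h.not_ge (sortedDesc_apply f i ▸ this)

lemma exists_ne_zero_dotProduct_submatrix_le {n r : ℕ} {A : Matrix (Fin n) (Fin n) ℝ}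
    (hA : A.IsHermitian) (hr : r < n) (K : Finset (Fin n)) (hK : r < K.card) :
    ∃ y : K → ℝ, y ≠ 0 ∧ y ⬝ᵥ (A.submatrix Subtype.val Subtype.val *ᵥ y) ≤
      sortedDesc hA.eigenvalues ⟨r, hr⟩ * (y ⬝ᵥ y) := by
  set π := Tuple.sort fun j => -hA.eigenvalues j
  set S : Matrix (Fin n) K ℝ := (1 : Matrix (Fin n) (Fin n) ℝ).submatrix id Subtype.val
  -- `W *ᵥ y = 0` says that `S *ᵥ y` is orthogonal to the eigenvectors of the `r` largest
  -- eigenvalues of `A`.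
  let W : Matrix (Fin r) K ℝ :=
    of fun t => Sᵀ *ᵥ hA.eigenvectorBasis (π (Fin.castLE hr.le t))
  obtain ⟨y, hyW, hy0⟩ : ∃ y ∈ LinearMap.ker W.mulVecLin, y ≠ 0 :=
    Submodule.exists_mem_ne_zero_of_ne_bot (LinearMap.ker_ne_bot_of_finrank_lt (by simpa using hK))
  have hSS : Sᵀ * S = 1 := by
    rw [transpose_one_submatrix_id_mul, submatrix_submatrix]
    exact submatrix_one _ Subtype.val_injective
  refine ⟨y, hy0, ?_⟩
  calc y ⬝ᵥ (A.submatrix Subtype.val Subtype.val *ᵥ y)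
        = (S *ᵥ y) ⬝ᵥ (A *ᵥ (S *ᵥ y)) := by
        rw [← transpose_mul_mul_one_submatrix_id, ← mulVec_mulVec, ← mulVec_mulVec,
          dotProduct_mulVec, ← mulVec_transpose, transpose_transpose, dotProduct_comm]
    _ ≤ sortedDesc hA.eigenvalues ⟨r, hr⟩ * ((S *ᵥ y) ⬝ᵥ (S *ᵥ y)) := by
        refine hA.dotProduct_mulVec_le fun j hj => ?_
        have := congrFun hyW ⟨_, sort_symm_lt_of_sortedDesc_lt hj⟩
        rw [dotProduct_mulVec, ← mulVec_transpose]
        simpa [W, π, mulVec, dotProduct] using this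
    _ = sortedDesc hA.eigenvalues ⟨r, hr⟩ * (y ⬝ᵥ y) := by
        rw [dotProduct_mulVec, ← mulVec_transpose, mulVec_mulVec, hSS, one_mulVec]

section CrossApprox

variable {n : ℕ} (A : Matrix (Fin n) (Fin n) ℝ) (J : Finset (Fin n))

lemma posSemidef_sub_crossApprox (hA : A.PosSemidef) (hJ : pminor A J ≠ 0) :
    (A - crossApprox A J).PosSemidef := by
  set S : Matrix (Fin n) J ℝ := (1 : Matrix (Fin n) (Fin n) ℝ).submatrix id Subtype.val
  have hSt : Sᴴ = Sᵀ := conjTranspose_eq_transpose_of_trivial S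
  have hcross : crossApprox A J = A * S * (Sᴴ * A * S)⁻¹ * (Sᴴ * A) := by
    rw [hSt, transpose_mul_mul_one_submatrix_id, mul_one_submatrix_id,
      transpose_one_submatrix_id_mul]
    rfl
  rw [hcross]
  refine hA.sub_mul_inv_mul S ?_
  rw [hSt, transpose_mul_mul_one_submatrix_id]
  exact isUnit_iff_ne_zero.mpr hJ

lemma submatrix_val_id_crossApprox (hJ : pminor A J ≠ 0) :
    (crossApprox A J).submatrix Subtype.val id = A.submatrix (Subtype.val : J → Fin n) id := by
  rw [crossApprox, submatrix_mul _ _ _ id _ Function.bijective_id,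
    submatrix_mul _ _ _ id _ Function.bijective_id]
  simp only [submatrix_submatrix, submatrix_id_id, Function.comp_id, Function.id_comp]
  rw [mul_nonsing_inv _ (isUnit_iff_ne_zero.mpr hJ), Matrix.one_mul]

lemma sub_crossApprox_apply_self_of_mem (hJ : pminor A J ≠ 0) {i : Fin n} (hi : i ∈ J) :
    (A - crossApprox A J) i i = 0 := by
  rw [Matrix.sub_apply, sub_eq_zero]
  exact (congrFun (congrFun (submatrix_val_id_crossApprox A J hJ) ⟨i, hi⟩) i).symm

lemma pminor_insert (hJ : pminor A J ≠ 0) {i : Fin n} (hi : i ∉ J) :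
    pminor A (insert i J) = pminor A J * (A - crossApprox A J) i i := by
  let e := (Finset.subtypeInsertEquivOption hi).trans (Equiv.optionEquivSumPUnit.{0} J)
  have : Invertible (A.submatrix (Subtype.val : J → Fin n) Subtype.val) :=
    (A.submatrix _ _).invertibleOfIsUnitDet (isUnit_iff_ne_zero.mpr hJ)
  have hblocks :
      (A.submatrix (Subtype.val : ↥(insert i J) → Fin n) Subtype.val).submatrix e.symm e.symm =
        fromBlocks (A.submatrix Subtype.val Subtype.val) (of fun k (_ : PUnit) => A k.1 i)
          (of fun (_ : PUnit) l => A i l.1) (of fun _ _ => A i i) := by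
    ext (k | _) (l | _) <;> rfl
  rw [pminor, ← det_submatrix_equiv_self e.symm, hblocks, det_fromBlocks₁₁, pminor]
  congr 1
  rw [det_unique, invOf_eq_nonsing_inv]
  rfl

end CrossApprox

lemma trace_adjugate_submatrix {n : ℕ} (A : Matrix (Fin n) (Fin n) ℝ) (K : Finset (Fin n)) :
    (A.submatrix (Subtype.val : K → Fin n) Subtype.val).adjugate.trace =
      ∑ k ∈ K, pminor A (K.erase k) := by
  rw [trace, ← Finset.sum_coe_sort K]
  refine Finset.sum_congr rfl fun k _ => ?_
  let e : ↥(K.erase k) ≃ {a : K // a ≠ k} :=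
    { toFun := fun x => ⟨⟨x, Finset.mem_of_mem_erase x.2⟩,
        fun h => (Finset.mem_erase.1 x.2).1 (congrArg Subtype.val h)⟩
      invFun := fun a => ⟨a.1, Finset.mem_erase.2 ⟨fun h => a.2 (Subtype.ext h), a.1.2⟩⟩
      left_inv := fun _ => rfl
      right_inv := fun _ => rfl }
  rw [diag_apply, adjugate_apply_self, pminor, ← det_submatrix_equiv_self e]
  rfl

lemma sum_pminor_erase_insert_le {n r : ℕ} {A : Matrix (Fin n) (Fin n) ℝ} {J : Finset (Fin n)}
    (hJcard : J.card = r) (hJ : 0 < pminor A J)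
    (hloc : ∀ K : Finset (Fin n), K.card = r → (J ∩ K).card = r - 1 →
      |pminor A K| ≤ |pminor A J|) {i : Fin n} (hi : i ∉ J) :
    ∑ k ∈ insert i J, pminor A ((insert i J).erase k) ≤ (r + 1) * pminor A J := by
  rw [Finset.sum_insert hi, Finset.erase_insert hi]
  have hle : ∀ k ∈ J, pminor A ((insert i J).erase k) ≤ pminor A J := fun k hk => by
    have hcard : ((insert i J).erase k).card = r := by
      rw [Finset.card_erase_of_mem (Finset.mem_insert_of_mem hk), Finset.card_insert_of_notMem hi,
        hJcard, Nat.add_sub_cancel]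
    have hinter : J ∩ (insert i J).erase k = J.erase k := by
      ext a
      simp only [Finset.mem_inter, Finset.mem_erase, Finset.mem_insert]
      tauto
    have hinter_card : (J ∩ (insert i J).erase k).card = r - 1 := by
      rw [hinter, Finset.card_erase_of_mem hk, hJcard]
    exact (le_abs_self _).trans ((hloc _ hcard hinter_card).trans (abs_of_pos hJ).le)
  have := Finset.sum_le_card_nsmul J _ _ hle
  rw [hJcard, nsmul_eq_mul] at this
  linarith

lemma sub_crossApprox_apply_self_le_of_notMem {n r : ℕ} (hrn : r < n)
    {A : Matrix (Fin n) (Fin n) ℝ} (hA : A.PosSemidef) {J : Finset (Fin n)} (hJcard : J.card = r)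
    (hJ : pminor A J ≠ 0)
    (hloc : ∀ K : Finset (Fin n), K.card = r → (J ∩ K).card = r - 1 →
      |pminor A K| ≤ |pminor A J|) {i : Fin n} (hi : i ∉ J) :
    (A - crossApprox A J) i i ≤ (r + 1) * sortedDesc hA.1.eigenvalues ⟨r, hrn⟩ := by
  set σ := sortedDesc hA.1.eigenvalues ⟨r, hrn⟩
  set K := insert i J
  have hB := hA.submatrix (Subtype.val : K → Fin n)
  have hpos : 0 < pminor A J := ((hA.submatrix _).posDef_iff_det_ne_zero.mpr hJ).det_pos
  obtain ⟨y, hy0, hy⟩ := exists_ne_zero_dotProduct_submatrix_le hA.1 hrn K (by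
    rw [Finset.card_insert_of_notMem hi, hJcard]; omega)
  obtain ⟨k, hk⟩ := hB.1.exists_eigenvalue_le hy0 hy
  have : pminor A J * (A - crossApprox A J) i i ≤ pminor A J * ((r + 1) * σ) :=
    calc pminor A J * (A - crossApprox A J) i i = pminor A K := (pminor_insert A J hJ hi).symm
      _ ≤ hB.1.eigenvalues k * ∑ l ∈ K, pminor A (K.erase l) := by
        rw [← trace_adjugate_submatrix]
        exact hB.det_le_eigenvalue_mul_trace_adjugate k
      _ ≤ hB.1.eigenvalues k * ((r + 1) * pminor A J) :=
        mul_le_mul_of_nonneg_left (sum_pminor_erase_insert_le hJcard hpos hloc hi)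
          (hB.eigenvalues_nonneg k)
      _ ≤ σ * ((r + 1) * pminor A J) := mul_le_mul_of_nonneg_right hk (by positivity)
      _ = pminor A J * ((r + 1) * σ) := by ring
  exact le_of_mul_le_mul_left this hpos

/-- If `A` is SPSD, `J` has cardinality `r < n`, `A(J,J)` is invertible and the
volume of `A(J,J)` is locally optimal (no single-index replacement increases `|det|`), then
`‖A - A_J‖_max ≤ (r+1) σ_{r+1}(A)`, where `σ` are the eigenvalues of `A` sorted
nonincreasingly (0-based index `r` is the `(r+1)`-st singular value). -/
theorem cross_approx_maxNorm_of_locally_optimal {n r : ℕ} (hrn : r < n)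
    (A : Matrix (Fin n) (Fin n) ℝ) (hA : A.PosSemidef)
    (J : Finset (Fin n)) (hJcard : J.card = r) (hJinv : pminor A J ≠ 0)
    (hloc : ∀ K : Finset (Fin n), K.card = r → (J ∩ K).card = r - 1 →
      |pminor A K| ≤ |pminor A J|) :
    maxNorm (A - crossApprox A J) ≤ (r + 1 : ℝ) * sortedDesc hA.1.eigenvalues ⟨r, hrn⟩ := by
  have hσ : 0 ≤ sortedDesc hA.1.eigenvalues ⟨r, hrn⟩ := by
    rw [sortedDesc_apply]
    exact hA.eigenvalues_nonneg _
  refine maxNorm_le_of_posSemidef (posSemidef_sub_crossApprox A J hA hJinv) (by positivity)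
    fun i => ?_
  by_cases hi : i ∈ J
  · rw [sub_crossApprox_apply_self_of_mem A J hJinv hi]
    positivity
  · exact sub_crossApprox_apply_self_le_of_notMem hrn hA hJcard hJinv hloc hi
end

section
/- Let A ∈ ℝ^{n×n} be symmetric positive semidefinite, let 1 ≤ t ≤ r ≤ n, and let J_1 = {j_1,…,j_t} ⊆ {1,…,n} be such that A(J_1,J_1) is invertible. Then the sum, over all ordered tuples (j_{t+1},…,j_r) of pairwise distinct indices in {1,…,n} ∖ J_1, of det(A(J,J)) with J = J_1 ∪ {j_{t+1},…,j_r}, equals det(A(J_1,J_1)) · (r−t)! · E_{r−t}(A − A_{J_1}), where E_{r−t}(M) denotes the sum of all (r−t)×(r−t) principal minors of M. -/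
/-!
For `K` disjoint from `J`, the Schur complement of `A(J,J)` in `A(J ∪ K, J ∪ K)` is
`(A - A_J)(K,K)`, so `det A(J ∪ K) = det A(J) · det (A - A_J)(K,K)`. The rows of `A - A_J`
indexed by `J` vanish, so `E_k(A - A_J)` only involves the `k`-subsets `K` of the complement
of `J`, and each such `K` is the image of exactly `k!` tuples of distinct indices.
-/

open Matrix Finset

section Embeddings

variable {α : Type*} [Fintype α] [DecidableEq α] {k : ℕ}

lemma card_filter_embedding_map_univ_eq_factorial {K : Finset α} (hK : #K = k) :
    #(univ.filter fun f : Fin k ↪ α ↦ univ.map f = K) = k.factorial := by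
  have hfilter : (univ.filter fun f : Fin k ↪ α ↦ univ.map f = K) =
      univ.filter fun f ↦ ∀ i, f i ∈ K := by
    refine filter_congr fun f _ ↦ ⟨fun h i ↦ h ▸ mem_map_of_mem f (mem_univ i), fun h ↦ ?_⟩
    refine eq_of_subset_of_card_le (fun x hx ↦ ?_) (by simp [hK])
    obtain ⟨i, -, rfl⟩ := mem_map.mp hx
    exact h i
  let e : {f : Fin k ↪ α // ∀ i, f i ∈ K} ≃ (Fin k ↪ K) :=
    { toFun := fun f ↦ Function.Embedding.codRestrict _ f.1 f.2
      invFun := fun g ↦ ⟨g.trans (Function.Embedding.subtype _), fun i ↦ (g i).2⟩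
      left_inv := fun _ ↦ rfl
      right_inv := fun _ ↦ rfl }
  rw [hfilter, ← Fintype.card_subtype, Fintype.card_congr e, Fintype.card_embedding_eq]
  simp [hK, Nat.descFactorial_self]

lemma sum_filter_embedding_eq_factorial_smul_sum_powersetCard {M : Type*} [AddCommMonoid M]
    (s : Finset α) (g : Finset α → M) :
    ∑ f ∈ univ.filter (fun f : Fin k ↪ α ↦ ∀ i, f i ∈ s), g (univ.map f) =
      k.factorial • ∑ K ∈ powersetCard k s, g K := by
  have hmaps : ∀ f ∈ univ.filter (fun f : Fin k ↪ α ↦ ∀ i, f i ∈ s),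
      univ.map f ∈ powersetCard k s := by
    intro f hf
    refine mem_powersetCard.mpr ⟨fun x hx ↦ ?_, by simp⟩
    obtain ⟨i, -, rfl⟩ := mem_map.mp hx
    exact (mem_filter.mp hf).2 i
  rw [← sum_fiberwise_of_maps_to hmaps, smul_sum]
  refine sum_congr rfl fun K hK ↦ ?_
  obtain ⟨hKs, hK⟩ := mem_powersetCard.mp hK
  have hfiber : ((univ.filter fun f : Fin k ↪ α ↦ ∀ i, f i ∈ s).filter fun f ↦ univ.map f = K) =
      univ.filter fun f ↦ univ.map f = K := by
    rw [filter_filter]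
    exact filter_congr fun f _ ↦ and_iff_right_of_imp fun h i ↦
      hKs (h ▸ mem_map_of_mem f (mem_univ i))
  rw [hfiber, sum_congr rfl fun f hf ↦ by rw [(mem_filter.mp hf).2], sum_const,
    card_filter_embedding_map_univ_eq_factorial hK]

end Embeddings

section CrossApprox

variable {n : ℕ} {A : Matrix (Fin n) (Fin n) ℝ} {J : Finset (Fin n)}

lemma crossApprox_apply_of_mem (hJ : pminor A J ≠ 0) {i : Fin n} (hi : i ∈ J) (j : Fin n) :
    crossApprox A J i j = A i j := by
  let AJ : Matrix J J ℝ := A.submatrix (Subtype.val : J → Fin n) Subtype.val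
  let AJrows : Matrix J (Fin n) ℝ := A.submatrix Subtype.val id
  have hrow : crossApprox A J i j = (AJ * AJ⁻¹ * AJrows) ⟨i, hi⟩ j := rfl
  rw [hrow, mul_nonsing_inv _ (isUnit_iff_ne_zero.mpr hJ), Matrix.one_mul]
  rfl

lemma pminor_sub_crossApprox_eq_zero (hJ : pminor A J ≠ 0) {K : Finset (Fin n)}
    (hJK : ¬Disjoint J K) : pminor (A - crossApprox A J) K = 0 := by
  obtain ⟨i, hiJ, hiK⟩ := not_disjoint_iff.mp hJK
  refine det_eq_zero_of_row_eq_zero (⟨i, hiK⟩ : K) fun j ↦ ?_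
  simp [crossApprox_apply_of_mem hJ hiJ]

lemma pminor_union_eq_mul_pminor_sub_crossApprox (hJ : pminor A J ≠ 0) {K : Finset (Fin n)}
    (hJK : Disjoint J K) : pminor A (J ∪ K) = pminor A J * pminor (A - crossApprox A J) K := by
  let AJ : Matrix J J ℝ := A.submatrix (Subtype.val : J → Fin n) Subtype.val
  let _ : Invertible AJ := AJ.invertibleOfIsUnitDet (isUnit_iff_ne_zero.mpr hJ)
  let e := Equiv.Finset.union J K hJK
  have hblocks : (A.submatrix (Subtype.val : (J ∪ K : Finset (Fin n)) → Fin n)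
      Subtype.val).submatrix e e =
      fromBlocks AJ (A.submatrix Subtype.val Subtype.val) (A.submatrix Subtype.val Subtype.val)
        (A.submatrix (Subtype.val : K → Fin n) Subtype.val) := by
    ext (i | i) (j | j) <;> rfl
  rw [pminor, ← det_submatrix_equiv_self e, hblocks, det_fromBlocks₁₁, invOf_eq_nonsing_inv]
  rfl

lemma Esum_sub_crossApprox_eq_sum_powersetCard_compl (hJ : pminor A J ≠ 0) (k : ℕ) :
    Esum (A - crossApprox A J) k = ∑ K ∈ powersetCard k Jᶜ, pminor (A - crossApprox A J) K := by
  refine (sum_subset (powersetCard_mono (subset_univ _)) fun K hK hKJ ↦ ?_).symm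
  refine pminor_sub_crossApprox_eq_zero hJ fun hdisj ↦ hKJ ?_
  exact mem_powersetCard.mpr ⟨subset_compl_iff_disjoint_left.mpr hdisj, (mem_powersetCard.mp hK).2⟩

end CrossApprox

theorem sum_minors_extending_eq_det_mul_Esum_general {n r t : ℕ}
    (A : Matrix (Fin n) (Fin n) ℝ)
    (J₁ : Finset (Fin n)) (hJ₁inv : pminor A J₁ ≠ 0) :
    ∑ f ∈ Finset.univ.filter (fun f : Fin (r - t) ↪ Fin n => ∀ i, f i ∉ J₁),
        pminor A (J₁ ∪ Finset.univ.map f) =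
      pminor A J₁ * (Nat.factorial (r - t) : ℝ) * Esum (A - crossApprox A J₁) (r - t) := by
  have hfilter : (univ.filter fun f : Fin (r - t) ↪ Fin n ↦ ∀ i, f i ∉ J₁) =
      univ.filter fun f ↦ ∀ i, f i ∈ J₁ᶜ :=
    filter_congr fun _ _ ↦ by simp only [mem_compl]
  rw [hfilter, sum_filter_embedding_eq_factorial_smul_sum_powersetCard _ fun K ↦ pminor A (J₁ ∪ K),
    nsmul_eq_mul, Esum_sub_crossApprox_eq_sum_powersetCard_compl hJ₁inv, mul_assoc, mul_sum,
    mul_sum, mul_sum]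
  refine sum_congr rfl fun K hK ↦ ?_
  rw [pminor_union_eq_mul_pminor_sub_crossApprox hJ₁inv
    (disjoint_left.mpr fun _ hJ hK' ↦ mem_compl.mp ((mem_powersetCard.mp hK).1 hK') hJ)]
  ring

/-- For `A` SPSD, `1 ≤ t ≤ r ≤ n` and `J₁` of cardinality `t` with `A(J₁,J₁)`
invertible, the sum over all ordered tuples of `r - t` pairwise distinct indices outside `J₁`
(i.e. over embeddings `Fin (r-t) ↪ Fin n` avoiding `J₁`) of `det A(J,J)` with
`J = J₁ ∪ {tuple}` equals `det A(J₁,J₁) · (r-t)! · E_{r-t}(A - A_{J₁})`. -/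
theorem sum_minors_extending_eq_det_mul_Esum {n r t : ℕ}
    (A : Matrix (Fin n) (Fin n) ℝ) (hA : A.PosSemidef)
    (ht : 1 ≤ t) (htr : t ≤ r) (hrn : r ≤ n)
    (J₁ : Finset (Fin n)) (hJ₁card : J₁.card = t) (hJ₁inv : pminor A J₁ ≠ 0) :
    ∑ f ∈ Finset.univ.filter (fun f : Fin (r - t) ↪ Fin n => ∀ i, f i ∉ J₁),
        pminor A (J₁ ∪ Finset.univ.map f) =
      pminor A J₁ * (Nat.factorial (r - t) : ℝ) * Esum (A - crossApprox A J₁) (r - t) :=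
  sum_minors_extending_eq_det_mul_Esum_general A J₁ hJ₁inv
end

section
/- Let A ∈ ℝ^{n×n} be symmetric, J = {j_1,…,j_r} ⊆ {1,…,n} with A(J,J) invertible, i ∈ {1,…,r}, and h ∈ {1,…,n} ∖ J. Let Ĵ be obtained from J by replacing j_i with h. Define D := A(J,J)^{-1}, B := A(:,J)D, and C_{hh} := B(h,:)·A(J,h). Then det(A(Ĵ,Ĵ)) / det(A(J,J)) = −det( [[D_{ii}, B_{hi}], [B_{hi}, C_{hh} − A_{hh}]] ). -/
open Matrix Finset

/-!
Relabelling `Ĵ` by the transposition `(j h)` turns `A(Ĵ,Ĵ)` into `A(J,J)` with row and column `j`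
replaced by `A(h,J)` and `A(J,h)`. That matrix is a rank-two update `A(J,J) + U W V`, so by the
matrix determinant lemma the determinant ratio is `det (1 + W V D U)`, a `2 × 2` determinant whose
entries are read off from `D`, `B` and `C_hh`; symmetry of `A` makes both off-diagonal entries
equal to `B_hj`.
-/

namespace Matrix

variable {ι R : Type*} [Fintype ι] [DecidableEq ι] [CommRing R]

theorem updateRow_updateCol_eq_add_mul (M : Matrix ι ι R) (i : ι) (u v : ι → R) (c : R) :
    (M.updateRow i u).updateCol i (Function.update v i c) =
      M + (of ![Pi.single i 1, v - M *ᵥ Pi.single i 1])ᵀ *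
        (!![c - u i - v i + M i i, 1; 1, 0] * of ![Pi.single i 1, u - Pi.single i 1 ᵥ* M]) := by
  ext k l
  by_cases hk : k = i <;> by_cases hl : l = i <;> simp [mul_apply, hk, hl]
  ring

theorem det_updateRow_updateCol (M : Matrix ι ι R) (hM : IsUnit M.det) (i : ι) (u v : ι → R)
    (c : R) :
    ((M.updateRow i u).updateCol i (Function.update v i c)).det =
      -M.det * !![M⁻¹ i i, (M⁻¹ *ᵥ v) i; (u ᵥ* M⁻¹) i, u ⬝ᵥ M⁻¹ *ᵥ v - c].det := by
  set e : ι → R := Pi.single i 1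
  set r := u - e ᵥ* M
  set s := v - M *ᵥ e
  have hrD : r ᵥ* M⁻¹ = u ᵥ* M⁻¹ - e := by
    rw [sub_vecMul, vecMul_vecMul, mul_nonsing_inv M hM, vecMul_one]
  have hDs : M⁻¹ *ᵥ s = M⁻¹ *ᵥ v - e := by
    rw [mulVec_sub, mulVec_mulVec, nonsing_inv_mul M hM, one_mulVec]
  have h00 : e ᵥ* M⁻¹ ⬝ᵥ e = M⁻¹ i i := by simp [e]
  have h01 : e ᵥ* M⁻¹ ⬝ᵥ s = (M⁻¹ *ᵥ v) i - 1 := by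
    rw [← dotProduct_mulVec, hDs]
    simp [e]
  have h10 : r ᵥ* M⁻¹ ⬝ᵥ e = (u ᵥ* M⁻¹) i - 1 := by simp [hrD, e]
  have h11 : r ᵥ* M⁻¹ ⬝ᵥ s = u ⬝ᵥ M⁻¹ *ᵥ v - u i - v i + M i i := by
    rw [hrD, sub_dotProduct, ← dotProduct_mulVec, hDs]
    simp [e, s]
    ring
  have hG : of ![e, r] * M⁻¹ * (of ![e, s])ᵀ =
      !![M⁻¹ i i, (M⁻¹ *ᵥ v) i - 1; (u ᵥ* M⁻¹) i - 1, u ⬝ᵥ M⁻¹ *ᵥ v - u i - v i + M i i] := by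
    rw [eta_fin_two (of ![e, r] * M⁻¹ * (of ![e, s])ᵀ), ← h00, ← h01, ← h10, ← h11]
    rfl
  rw [updateRow_updateCol_eq_add_mul, det_add_mul _ _ hM, Matrix.mul_assoc, Matrix.mul_assoc,
    ← Matrix.mul_assoc _ M⁻¹, hG]
  -- `det (1 + W G) = det W * det (W⁻¹ + G)` with `det W = -1` and `W⁻¹ = !![0, 1; 1, -(W 0 0)]`
  simp [det_fin_two_of, one_fin_two]
  ring

theorem submatrix_swap_eq_updateRow_updateCol {ι R : Type*} [DecidableEq ι] (A : Matrix ι ι R)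
    {J : Finset ι} (j : J) {h : ι} (hh : h ∉ J) :
    (A.submatrix (Equiv.swap j.1 h) (Equiv.swap j.1 h)).submatrix Subtype.val Subtype.val =
      ((A.submatrix Subtype.val Subtype.val).updateRow j (fun k : J => A h k)).updateCol j
        (Function.update (fun k : J => A k h) j (A h h)) := by
  have hswap : ∀ k : J, k ≠ j → Equiv.swap j.1 h k = k := fun k hk =>
    Equiv.swap_apply_of_ne_of_ne (Subtype.coe_injective.ne hk) (ne_of_mem_of_not_mem k.2 hh)
  ext k l
  by_cases hk : k = j <;> by_cases hl : l = j <;> subst_vars <;> simp [*]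

end Matrix

theorem Finset.map_swap_eq_insert_erase {α : Type*} [DecidableEq α] {s : Finset α} {a b : α}
    (ha : a ∈ s) (hb : b ∉ s) : s.map (Equiv.swap a b).toEmbedding = insert b (s.erase a) := by
  ext x
  simp only [mem_map_equiv, Equiv.symm_swap, Equiv.swap_apply_def, mem_insert, mem_erase]
  grind

theorem pminor_map_equiv {n : ℕ} (A : Matrix (Fin n) (Fin n) ℝ) (J : Finset (Fin n))
    (σ : Fin n ≃ Fin n) : pminor A (J.map σ.toEmbedding) = pminor (A.submatrix σ σ) J :=
  (det_submatrix_equiv_self (σ.subtypeEquiv fun _ => by simp) _).symm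

theorem det_ratio_index_swap_general {n : ℕ} (A : Matrix (Fin n) (Fin n) ℝ) (hA : A.IsSymm)
    (J : Finset (Fin n)) (hJinv : pminor A J ≠ 0)
    (j : Fin n) (hj : j ∈ J) (h : Fin n) (hh : h ∉ J) :
    let D := (A.submatrix (Subtype.val : J → Fin n) (Subtype.val : J → Fin n))⁻¹
    let B := A.submatrix id (Subtype.val : J → Fin n) * D
    let Chh := ∑ k : J, B h k * A k.1 h
    pminor A (insert h (J.erase j)) / pminor A J =
      -Matrix.det !![D ⟨j, hj⟩ ⟨j, hj⟩, B h ⟨j, hj⟩; B h ⟨j, hj⟩, Chh - A h h] := by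
  intro D B Chh
  have hdet : IsUnit (A.submatrix (Subtype.val : J → Fin n) Subtype.val).det :=
    isUnit_iff_ne_zero.mpr hJinv
  rw [← Finset.map_swap_eq_insert_erase hj hh, pminor_map_equiv, pminor,
    submatrix_swap_eq_updateRow_updateCol A ⟨j, hj⟩ hh, det_updateRow_updateCol _ hdet]
  set u : J → ℝ := fun k => A h k
  have hu : (fun k : J => A k h) = u := funext fun k => hA.apply h k
  have hBu : B h = u ᵥ* D := rfl
  have hDu : D *ᵥ u = B h := by
    rw [hBu, ← vecMul_transpose, transpose_nonsing_inv, (hA.submatrix _).eq]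
  have hC : u ⬝ᵥ B h = Chh := by
    rw [dotProduct_comm, ← hu]
    rfl
  rw [hu, hDu, ← hBu, hC, neg_mul, neg_div]
  exact congrArg _ (mul_div_cancel_left₀ _ hJinv)

/-- determinant-update formula. For `A` symmetric, `J` of cardinality `r` with
`A(J,J)` invertible, `j ∈ J`, `h ∉ J` and `Ĵ = (J \ {j}) ∪ {h}`, with `D = A(J,J)⁻¹`,
`B = A(:,J) D` and `C_hh = B(h,:)·A(J,h)`, one has
`det A(Ĵ,Ĵ) / det A(J,J) = -det [[D_jj, B_hj], [B_hj, C_hh - A_hh]]`. -/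
theorem det_ratio_index_swap {n r : ℕ} (A : Matrix (Fin n) (Fin n) ℝ) (hA : A.IsSymm)
    (J : Finset (Fin n)) (hJcard : J.card = r) (hJinv : pminor A J ≠ 0)
    (j : Fin n) (hj : j ∈ J) (h : Fin n) (hh : h ∉ J) :
    let D := (A.submatrix (Subtype.val : J → Fin n) (Subtype.val : J → Fin n))⁻¹
    let B := A.submatrix id (Subtype.val : J → Fin n) * D
    let Chh := ∑ k : J, B h k * A k.1 h
    pminor A (insert h (J.erase j)) / pminor A J =
      -Matrix.det !![D ⟨j, hj⟩ ⟨j, hj⟩, B h ⟨j, hj⟩; B h ⟨j, hj⟩, Chh - A h h] :=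
  det_ratio_index_swap_general A hA J hJinv j hj h hh
end
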